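/- For every λ>0 there exists γ₀>0 such that for all γ∈(0,γ₀) for which (2γ)^{-1} is a positive even integer and ℓ₀:=γ^{-1/2} is a positive integer, one has |ℓ₀·Σ_{i∈ℤ} J_γ(|i|ℓ₀) − 1| ≤ 3(1+λ)γ^{1/2}. -/

import Mathlib

/-!
Since `ℓ₀² = γ⁻¹ = 2M`, `ℓ₀ = 2n` is even and `γ = (2n)⁻²`. The grid point `i ℓ₀` lies in the
Kac range `|r| ≤ (2γ)⁻¹ = 2n²` exactly when `|i| ≤ n`, so
`ℓ₀ Σᵢ J_γ(|i| ℓ₀) = (2n + 1)/(2n) + (λ/ℓ₀) Σ_{|i| > n} i⁻²`, and the tail sum is at most `2/n`.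
-/

/-- The Kac coupling with long-range tail: `J_γ(r) = γ` if `|r| ≤ (2γ)⁻¹` and
`J_γ(r) = λ/r²` otherwise. -/
noncomputable def coupling (lam gam : ℝ) (r : ℝ) : ℝ :=
  if |r| ≤ (2 * gam)⁻¹ then gam else lam / r ^ 2

open Finset

theorem HasSum.comp_natAbs {G : Type*} [AddCommGroup G] [TopologicalSpace G]
    [IsTopologicalAddGroup G] {f : ℕ → G} {a : G} (hf : HasSum f a) :
    HasSum (fun i : ℤ => f i.natAbs) (a + a - f 0) := by
  simpa using HasSum.of_nat_of_neg (f := fun i : ℤ => f i.natAbs) (by simpa using hf)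
    (by simpa using hf)

noncomputable def invSqTail (n j : ℕ) : ℝ := if n < j then ((j : ℝ) ^ 2)⁻¹ else 0

theorem invSqTail_zero (n : ℕ) : invSqTail n 0 = 0 := if_neg n.not_lt_zero

theorem invSqTail_nonneg (n j : ℕ) : 0 ≤ invSqTail n j := by
  unfold invSqTail; split <;> positivity

theorem sum_range_invSqTail_le {n : ℕ} (hn : n ≠ 0) (N : ℕ) :
    ∑ j ∈ range N, invSqTail n j ≤ (n : ℝ)⁻¹ := by
  have hsub : (range N).filter (n < ·) ⊆ Ioc n (max (n + 1) N) := fun j hj => by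
    simp only [mem_filter, mem_range] at hj
    exact mem_Ioc.2 ⟨hj.2, le_max_of_le_right hj.1.le⟩
  calc ∑ j ∈ range N, invSqTail n j = ∑ j ∈ (range N).filter (n < ·), ((j : ℝ) ^ 2)⁻¹ :=
        (sum_filter _ _).symm
    _ ≤ ∑ j ∈ Ioc n (max (n + 1) N), ((j : ℝ) ^ 2)⁻¹ :=
        sum_le_sum_of_subset_of_nonneg hsub fun _ _ _ => by positivity
    _ ≤ (n : ℝ)⁻¹ - ((max (n + 1) N : ℕ) : ℝ)⁻¹ :=
        sum_Ioc_inv_sq_le_sub hn ((Nat.le_succ n).trans (le_max_left _ _))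
    _ ≤ (n : ℝ)⁻¹ := sub_le_self _ (by positivity)

theorem summable_invSqTail {n : ℕ} (hn : n ≠ 0) : Summable (invSqTail n) :=
  summable_of_sum_range_le (invSqTail_nonneg n) (sum_range_invSqTail_le hn)

theorem tsum_invSqTail_le {n : ℕ} (hn : n ≠ 0) : ∑' j, invSqTail n j ≤ (n : ℝ)⁻¹ :=
  Real.tsum_le_of_sum_range_le (invSqTail_nonneg n) (sum_range_invSqTail_le hn)

theorem coupling_grid_eq (lam : ℝ) {n : ℕ} (hn : 0 < n) (j : ℕ) :
    coupling lam ((2 * n : ℝ) ^ 2)⁻¹ (j * (2 * n)) =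
      (if j ≤ n then ((2 * n : ℝ) ^ 2)⁻¹ else 0) + lam / (2 * n) ^ 2 * invSqTail n j := by
  have hn' : (0 : ℝ) < n := by exact_mod_cast hn
  have hcut : |(j : ℝ) * (2 * n)| ≤ (2 * ((2 * n : ℝ) ^ 2)⁻¹)⁻¹ ↔ j ≤ n := by
    rw [abs_of_nonneg (by positivity), show (2 * ((2 * n : ℝ) ^ 2)⁻¹)⁻¹ = n * (2 * n) by
      field_simp, mul_le_mul_iff_left₀ (by positivity)]
    exact Nat.cast_le
  unfold coupling invSqTail
  by_cases hj : j ≤ n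
  · rw [if_pos (hcut.2 hj), if_pos hj, if_neg hj.not_gt, mul_zero, add_zero]
  · rw [if_neg (mt hcut.1 hj), if_neg hj, if_pos (not_le.1 hj)]
    ring

theorem hasSum_coupling_grid (lam : ℝ) {n : ℕ} (hn : 0 < n) :
    HasSum (fun j : ℕ => coupling lam ((2 * n : ℝ) ^ 2)⁻¹ (j * (2 * n)))
      ((n + 1) * ((2 * n : ℝ) ^ 2)⁻¹ + lam / (2 * n) ^ 2 * ∑' j, invSqTail n j) := by
  simp only [coupling_grid_eq lam hn]
  refine HasSum.add ?_ ((summable_invSqTail hn.ne').hasSum.mul_left _)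
  have hbulk : HasSum (fun j : ℕ => if j ≤ n then ((2 * n : ℝ) ^ 2)⁻¹ else 0)
      (∑ j ∈ range (n + 1), if j ≤ n then ((2 * n : ℝ) ^ 2)⁻¹ else 0) :=
    hasSum_sum_of_ne_finset_zero fun j hj =>
      if_neg fun hjn => hj (mem_range.2 (Nat.lt_succ_of_le hjn))
  rwa [sum_congr rfl fun j hj => if_pos (Nat.lt_succ_iff.1 (mem_range.1 hj)), sum_const,
    card_range, nsmul_eq_mul, Nat.cast_succ] at hbulk

theorem abs_two_mul_tsum_coupling_grid_sub_one_le {lam : ℝ} (hlam : 0 ≤ lam) {n : ℕ}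
    (hn : 0 < n) :
    |(2 * n : ℝ) * ∑' i : ℤ, coupling lam ((2 * n : ℝ) ^ 2)⁻¹ (|(i : ℝ)| * (2 * n)) - 1| ≤
      (1 + 2 * lam) / (2 * n) := by
  have hsum := (hasSum_coupling_grid lam hn).comp_natAbs
  simp only [Nat.cast_natAbs, Int.cast_abs, coupling_grid_eq lam hn 0, Nat.zero_le, if_true,
    invSqTail_zero, mul_zero, add_zero] at hsum
  rw [hsum.tsum_eq]
  set S := ∑' j, invSqTail n j
  have hS0 : 0 ≤ S := tsum_nonneg (invSqTail_nonneg n)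
  have hS : S ≤ 1 :=
    (tsum_invSqTail_le hn.ne').trans (inv_le_one_of_one_le₀ (by exact_mod_cast hn))
  have hval : (2 * n : ℝ) * ((n + 1) * ((2 * n : ℝ) ^ 2)⁻¹ + lam / (2 * n) ^ 2 * S +
      ((n + 1) * ((2 * n : ℝ) ^ 2)⁻¹ + lam / (2 * n) ^ 2 * S) - ((2 * n : ℝ) ^ 2)⁻¹) - 1 =
      (1 + 2 * lam * S) / (2 * n) := by
    field_simp
    ring
  rw [hval, abs_of_nonneg (by positivity)]
  gcongr (1 + ?_) / _
  nlinarith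

/-- **Normalization of the coupling on the `ℓ₀`-grid.** For every `λ > 0` there exists
`γ₀ > 0` such that for all `γ ∈ (0, γ₀)` for which `(2γ)⁻¹` is a positive even integer and
`ℓ₀ := γ^{-1/2}` is a positive integer, one has
`|ℓ₀ · Σ_{i ∈ ℤ} J_γ(|i| ℓ₀) − 1| ≤ 3 (1 + λ) γ^{1/2}`. -/
theorem coupling_grid_normalization (lam : ℝ) (hlam : 0 < lam) :
    ∃ γ₀ : ℝ, 0 < γ₀ ∧
      ∀ gam : ℝ, 0 < gam → gam < γ₀ →
      (∃ M : ℕ, 0 < M ∧ Even M ∧ (M : ℝ) = (2 * gam)⁻¹) →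
      ∀ ℓ₀ : ℕ, 0 < ℓ₀ → (ℓ₀ : ℝ) = gam ^ (-(1/2 : ℝ)) →
      |(ℓ₀ : ℝ) * (∑' i : ℤ, coupling lam gam (|(i : ℝ)| * ℓ₀)) - 1|
        ≤ 3 * (1 + lam) * gam ^ (1/2 : ℝ) := by
  refine ⟨1, one_pos, ?_⟩
  rintro gam hgam - ⟨M, -, -, hM⟩ ℓ₀ hℓ₀ hℓ₀_eq
  have hsqrt : gam ^ (1 / 2 : ℝ) = (ℓ₀ : ℝ)⁻¹ := by
    rw [hℓ₀_eq, Real.rpow_neg hgam.le, inv_inv]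
  have hgam_eq : gam = ((ℓ₀ : ℝ) ^ 2)⁻¹ := by
    rw [← inv_pow, ← hsqrt, ← Real.sqrt_eq_rpow, Real.sq_sqrt hgam.le]
  have hℓ₀_sq : ℓ₀ ^ 2 = 2 * M := by
    have : ((ℓ₀ ^ 2 : ℕ) : ℝ) = (2 * M : ℕ) := by
      push_cast
      rw [hM, hgam_eq]
      field_simp
    exact_mod_cast this
  obtain ⟨n, rfl⟩ : 2 ∣ ℓ₀ := Nat.prime_two.dvd_of_dvd_pow (hℓ₀_sq ▸ dvd_mul_right 2 M)
  subst hgam_eq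
  rw [hsqrt]
  push_cast
  calc _ ≤ (1 + 2 * lam) / (2 * n : ℝ) :=
        abs_two_mul_tsum_coupling_grid_sub_one_le hlam.le (by omega)
    _ ≤ 3 * (1 + lam) * (2 * n : ℝ)⁻¹ := by
      rw [div_eq_mul_inv]
      gcongr
      linarith
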